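/- arXiv:1502.01651 — 6 statements merged into one kernel-verified Lean document; each statement's English description precedes it below -/
import Mathlib

section
/- Let S be a parasemifield (a commutative semiring whose multiplicative structure is an abelian group). If a + b + c = a for elements a, b, c ∈ S, then a + b = a. -/
/-- A parasemifield: a commutative semiring whose multiplicative structure is a
(nontrivial) abelian group. Multiplication, inverse and `1` come from `CommGroup`;
addition is commutative, associative, and multiplication distributes over it. -/
class Parasemifield (S : Type*) extends CommGroup S, Add S where
  add_comm : ∀ a b : S, a + b = b + a
  add_assoc : ∀ a b c : S, a + b + c = a + (b + c)
  mul_add : ∀ a b c : S, a * (b + c) = a * b + a * c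
  nontrivial : ∃ a b : S, a ≠ b

theorem stmt_0 {S : Type*} [Parasemifield S] (a b c : S) (h : a + b + c = a) :
    a + b = a := by
  have hd := Parasemifield.mul_add (S := S)
  have hac := Parasemifield.add_comm (S := S)
  have haa := Parasemifield.add_assoc (S := S)
  set t : S := b * (b + c)⁻¹ with ht
  set u : S := c * (b + c)⁻¹ with hu
  have hbc : (b + c) * t = b := by
    rw [ht, mul_comm b, ← mul_assoc, mul_inv_cancel, one_mul]
  -- a * t absorbs b
  have h1 : a * t + b = a * t := by
    calc a * t + b = a * t + (b + c) * t := by rw [hbc]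
      _ = t * a + t * (b + c) := by rw [mul_comm a t, mul_comm (b + c) t]
      _ = t * (a + (b + c)) := (hd _ _ _).symm
      _ = t * a := by rw [← haa, h]
      _ = a * t := mul_comm _ _
  -- a = a * t + a * u
  have h2 : a * t + a * u = a := by
    have htu : t + u = 1 := by
      rw [ht, hu, mul_comm b, mul_comm c, ← hd, inv_mul_cancel]
    calc a * t + a * u = a * (t + u) := (hd _ _ _).symm
      _ = a := by rw [htu, mul_one]
  calc a + b = a * t + a * u + b := by rw [h2]
    _ = a * t + (a * u + b) := haa _ _ _
    _ = a * t + (b + a * u) := by rw [hac (a * u) b]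
    _ = a * t + b + a * u := (haa _ _ _).symm
    _ = a * t + a * u := by rw [h1]
    _ = a := h2
end

section
/- Let S be a parasemifield. Define a ≤ b iff a = b or there exists c ∈ S with a + c = b. Then ≤ is antisymmetric: if a ≤ b and b ≤ a then a = b. -/
/-- The natural pre-order on a semiring: `a ≤ b` iff `a = b` or `∃ c, a + c = b`. -/
def psfLe {S : Type*} [Parasemifield S] (a b : S) : Prop :=
  a = b ∨ ∃ c : S, a + c = b

instance {S : Type*} [Parasemifield S] : AddCommSemigroup S where
  add_assoc := Parasemifield.add_assoc
  add_comm := Parasemifield.add_comm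

theorem stmt_1 {S : Type*} [Parasemifield S] (a b : S)
    (hab : psfLe a b) (hba : psfLe b a) : a = b := by
  rcases hab with rfl | ⟨c, hc⟩
  · rfl
  rcases hba with h | ⟨d, hd⟩
  · exact h.symm
  -- key : a + (c + d) = a
  set s : S := c + d with hs_def
  have hs : a + s = a := by
    rw [hs_def, ← add_assoc, hc, hd]
  -- multiply by c * s⁻¹ * a⁻¹
  have e1 : c * s⁻¹ * a⁻¹ * a + c * s⁻¹ * a⁻¹ * s = c * s⁻¹ * a⁻¹ * a := by
    rw [← Parasemifield.mul_add, hs]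
  have r1 : c * s⁻¹ * a⁻¹ * a = c * s⁻¹ := by group
  have r2 : c * s⁻¹ * a⁻¹ * s = c * a⁻¹ := by
    rw [mul_right_comm (c * s⁻¹) a⁻¹ s, inv_mul_cancel_right]
  rw [r1, r2] at e1
  -- e1 : c * s⁻¹ + c * a⁻¹ = c * s⁻¹
  have e2 : a * (c * s⁻¹) + c = a * (c * s⁻¹) := by
    have := congrArg (a * ·) e1
    simpa [Parasemifield.mul_add, mul_comm, mul_left_comm, mul_assoc] using this
  -- a decomposes
  have e3 : a * (c * s⁻¹) + a * (d * s⁻¹) = a := by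
    rw [← Parasemifield.mul_add, mul_comm c s⁻¹, mul_comm d s⁻¹,
      ← Parasemifield.mul_add, ← hs_def]
    group
  -- conclude
  have : a + c = a := by
    conv_lhs => rw [← e3]
    rw [add_assoc, add_comm (a * (d * s⁻¹)) c, ← add_assoc, e2, e3]
  rw [← hc, this]
end

section
/- Let S be a parasemifield, A its prime subparasemifield, and Q = {s ∈ S : ∃ q ∈ A, s ≤ q}. Then for q ∈ S and n ∈ ℕ, n ≥ 1: qⁿ ∈ Q if and only if q ∈ Q. -/
/-- A subparasemifield: a nonempty subset closed under addition, multiplication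
and multiplicative inverse. -/
def IsSubparasemifield {S : Type*} [Parasemifield S] (A : Set S) : Prop :=
  A.Nonempty ∧ (∀ a ∈ A, ∀ b ∈ A, a + b ∈ A) ∧
    (∀ a ∈ A, ∀ b ∈ A, a * b ∈ A) ∧ (∀ a ∈ A, a⁻¹ ∈ A)

section Aux
variable {S : Type*} [Parasemifield S]

instance (priority := 100) Parasemifield.toAddCommSemigroup : AddCommSemigroup S where
  add_assoc := Parasemifield.add_assoc
  add_comm := Parasemifield.add_comm

/-- the natural preorder -/
def ple (a b : S) : Prop := a = b ∨ ∃ c, a + c = b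

lemma ple_refl (a : S) : ple a a := Or.inl rfl

lemma ple_trans {a b c : S} (h1 : ple a b) (h2 : ple b c) : ple a c := by
  rcases h1 with rfl | ⟨x, rfl⟩
  · exact h2
  · rcases h2 with h | ⟨y, h⟩
    · exact Or.inr ⟨x, h⟩
    · exact Or.inr ⟨x + y, by rw [← add_assoc, h]⟩

lemma ple_add {a b c d : S} (h1 : ple a b) (h2 : ple c d) : ple (a + c) (b + d) := by
  rcases h1 with rfl | ⟨x, rfl⟩ <;> rcases h2 with rfl | ⟨y, rfl⟩
  · exact ple_refl _
  · exact Or.inr ⟨y, by rw [add_assoc]⟩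
  · exact Or.inr ⟨x, by rw [add_right_comm]⟩
  · exact Or.inr ⟨x + y, by rw [← add_assoc, add_right_comm a c x, add_assoc]⟩

lemma ple_mul_left {a b : S} (c : S) (h : ple a b) : ple (c * a) (c * b) := by
  rcases h with rfl | ⟨x, rfl⟩
  · exact ple_refl _
  · exact Or.inr ⟨c * x, (Parasemifield.mul_add c a x).symm⟩

lemma ple_mul {a b c d : S} (h1 : ple a b) (h2 : ple c d) : ple (a * c) (b * d) :=
  ple_trans (ple_mul_left a h2) (by rw [mul_comm a d, mul_comm b d]; exact ple_mul_left d h1)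

lemma ple_self_mul (x : S) (q : S) : ∀ m : ℕ, ple x (x * (1 + q) ^ m)
  | 0 => by rw [pow_zero, mul_one]; exact ple_refl x
  | (m+1) => by
      refine ple_trans (ple_self_mul x q m) ?_
      rw [pow_succ, ← mul_assoc, Parasemifield.mul_add, mul_one]
      exact Or.inr ⟨x * (1 + q) ^ m * q, rfl⟩

lemma ple_pow (q : S) : ∀ k : ℕ, ple (q ^ k) ((1 + q) ^ k)
  | 0 => by rw [pow_zero, pow_zero]; exact ple_refl 1
  | (k+1) => by
      rw [pow_succ, pow_succ]
      exact ple_mul (ple_pow q k) (Or.inr ⟨1, by rw [Parasemifield.add_comm]⟩)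

lemma ple_pow_le (q : S) {k n : ℕ} (hk : k ≤ n) : ple (q ^ k) ((1 + q) ^ n) := by
  obtain ⟨m, rfl⟩ := Nat.exists_eq_add_of_le hk
  rw [pow_add]
  exact ple_trans (ple_trans (ple_self_mul (q ^ k) q m) (ple_refl _))
    (ple_mul (ple_pow q k) (ple_refl _))

end Aux

theorem stmt_7 {S : Type*} [Parasemifield S] (A : Set S)
    (hA : IsSubparasemifield A)
    (hprime : ∀ B : Set S, IsSubparasemifield B → A ⊆ B)
    (Q : Set S) (hQ : Q = {s : S | ∃ q ∈ A, s = q ∨ ∃ c : S, s + c = q})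
    (q : S) (n : ℕ) (hn : 1 ≤ n) :
    q ^ n ∈ Q ↔ q ∈ Q := by
  obtain ⟨⟨a0, ha0⟩, hAadd, hAmul, hAinv⟩ := hA
  have hQ' : ∀ s : S, s ∈ Q ↔ ∃ a ∈ A, ple s a := by
    intro s; rw [hQ]; rfl
  have h1A : (1 : S) ∈ A := by
    have := hAmul a0 ha0 a0⁻¹ (hAinv a0 ha0)
    rwa [mul_inv_cancel] at this
  have Qmul : ∀ s t : S, s ∈ Q → t ∈ Q → s * t ∈ Q := by
    intro s t hs ht
    rw [hQ'] at hs ht ⊢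
    obtain ⟨a, ha, hsa⟩ := hs
    obtain ⟨b, hb, htb⟩ := ht
    exact ⟨a * b, hAmul a ha b hb, ple_mul hsa htb⟩
  have Qadd : ∀ s t : S, s ∈ Q → t ∈ Q → s + t ∈ Q := by
    intro s t hs ht
    rw [hQ'] at hs ht ⊢
    obtain ⟨a, ha, hsa⟩ := hs
    obtain ⟨b, hb, htb⟩ := ht
    exact ⟨a + b, hAadd a ha b hb, ple_add hsa htb⟩
  constructor
  · -- hard direction
    intro hqn
    set u : S := 1 + q with hu
    set v : S := (u ^ n)⁻¹ with hv
    -- q^k * v ∈ Q for k ≤ n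
    have hkv : ∀ k : ℕ, k ≤ n → q ^ k * v ∈ Q := by
      intro k hk
      rw [hQ']
      refine ⟨1, h1A, ?_⟩
      have := ple_mul_left v (ple_pow_le q hk)
      rw [hv] at this
      rw [inv_mul_cancel] at this
      rw [mul_comm] at this
      exact this
    -- q^(n+1) * v ∈ Q
    have hkv' : q ^ (n + 1) * v ∈ Q := by
      have : q ^ (n + 1) * v = q ^ n * (q ^ 1 * v) := by
        rw [pow_succ, pow_one, mul_assoc]
      rw [this]
      exact Qmul _ _ hqn (hkv 1 hn)
    -- main induction
    have main : ∀ m : ℕ, ∀ k : ℕ, k + m ≤ n + 1 → q ^ k * u ^ m * v ∈ Q := by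
      intro m
      induction m with
      | zero =>
        intro k hk
        rw [pow_zero, mul_one]
        rcases Nat.lt_or_ge k (n + 1) with h | h
        · exact hkv k (Nat.lt_succ_iff.mp h)
        · have : k = n + 1 := le_antisymm (by omega) h
          rw [this]; exact hkv'
      | succ m ih =>
        intro k hk
        have e1 : q ^ k * u ^ (m + 1) * v
            = q ^ k * u ^ m * v + q ^ (k + 1) * u ^ m * v := by
          have : q ^ k * u ^ (m + 1) * v = q ^ k * u ^ m * v * u := by
            rw [pow_succ]
            simp only [mul_assoc, mul_comm, mul_left_comm]
          rw [this, hu, Parasemifield.mul_add, mul_one, pow_succ]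
          congr 1
          simp only [mul_assoc, mul_comm, mul_left_comm]
        rw [e1]
        exact Qadd _ _ (ih k (by omega)) (ih (k + 1) (by omega))
    have : q = q ^ 1 * u ^ n * v := by
      rw [hv, pow_one, mul_assoc, mul_inv_cancel, mul_one]
    rw [this]
    exact main n 1 (by omega)
  · -- easy direction
    intro hq
    obtain ⟨m, rfl⟩ := Nat.exists_eq_add_of_le hn
    clear hn
    induction m with
    | zero => rwa [pow_one]
    | succ m ih =>
      have : q ^ (1 + (m + 1)) = q ^ (1 + m) * q := by rw [← pow_succ]; ring_nf
      rw [this]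
      exact Qmul _ _ ih hq
end

section
/- Let S be a parasemifield generated as a semiring by x₁, …, x_m via a surjective semiring homomorphism φ: ℕ[x₁,…,x_m] → S. Let Q = {s ∈ S : ∃ q ∈ A, s ≤ q} (A the prime subparasemifield) and 𝒞 = {a ∈ ℕ₀^m : φ(x^a) ∈ Q}. Then 𝒞 is a pure subsemigroup of ℕ₀^m: it is closed under addition, and for n ∈ ℕ, n ≥ 1, and a ∈ ℕ₀^m, na ∈ 𝒞 if and only if a ∈ 𝒞. -/
/-- The subset of `S` generated by `X` under addition and multiplication;
`∀ t, SemiringGen X t` says that `X` generates `S` as a semiring, i.e. that the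
evaluation homomorphism `φ : ℕ[x₁,…,x_m] → S` sending the variables to the
elements of `X` is surjective. -/
inductive SemiringGen {S : Type*} [Add S] [Mul S] (X : Set S) : S → Prop
  | base {x : S} : x ∈ X → SemiringGen X x
  | add {a b : S} : SemiringGen X a → SemiringGen X b → SemiringGen X (a + b)
  | mul {a b : S} : SemiringGen X a → SemiringGen X b → SemiringGen X (a * b)

section Aux

variable {S : Type*} [Parasemifield S]

lemma ps_mul_add (a b c : S) : a * (b + c) = a * b + a * c := Parasemifield.mul_add a b c

lemma ps_add_mul (a b c : S) : (a + b) * c = a * c + b * c := by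
  rw [mul_comm, ps_mul_add, mul_comm c a, mul_comm c b]

lemma wz_left_distrib : ∀ a b c : WithZero S, a * (b + c) = a * b + a * c := by
  intro a b c
  induction a using WithZero.recZeroCoe with
  | zero => simp
  | coe a =>
    induction b using WithZero.recZeroCoe with
    | zero => simp
    | coe b =>
      induction c using WithZero.recZeroCoe with
      | zero => simp
      | coe c =>
        rw [← WithZero.coe_add, ← WithZero.coe_mul, ← WithZero.coe_mul, ← WithZero.coe_mul,
          ← WithZero.coe_add, ps_mul_add]

noncomputable instance : CommSemiring (WithZero S) where
  __ := (inferInstance : AddCommMonoid (WithZero S))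
  __ := (inferInstance : CommMonoidWithZero (WithZero S))
  left_distrib := wz_left_distrib
  right_distrib := by
    intro a b c
    rw [mul_comm, wz_left_distrib, mul_comm c a, mul_comm c b]

lemma key_identity {R : Type*} [CommSemiring R] (x : R) (m : ℕ) :
    x * (∑ k ∈ Finset.range (m+1), x^k)
      + (((m+1 : ℕ) : R) + ∑ k ∈ Finset.range m, (((m:ℕ):R) * x^(k+1) + x^(k+m+2)))
    = (((m+1 : ℕ):R) + x^(m+1)) * (∑ k ∈ Finset.range (m+1), x^k) := by
  rw [add_mul, Finset.mul_sum, Finset.mul_sum, Finset.mul_sum, Finset.sum_add_distrib,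
    Finset.sum_range_succ (fun k => x * x^k),
    Finset.sum_range_succ' (fun k => ((m+1:ℕ):R) * x^k) m,
    Finset.sum_range_succ' (fun k => x^(m+1) * x^k) m]
  have h1 : (∑ k ∈ Finset.range m, x * x ^ k) + ∑ k ∈ Finset.range m, ((m:ℕ):R) * x^(k+1)
      = ∑ k ∈ Finset.range m, ((m+1:ℕ):R) * x^(k+1) := by
    rw [← Finset.sum_add_distrib]
    refine Finset.sum_congr rfl fun k _ => ?_
    push_cast
    ring
  have h2 : (∑ k ∈ Finset.range m, x^(k+m+2)) = ∑ k ∈ Finset.range m, x^(m+1) * x^(k+1) := by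
    refine Finset.sum_congr rfl fun k _ => ?_
    rw [← pow_add]
    ring_nf
  have h3 : x * x ^ m = x ^ (m+1) := by ring
  have h4 : ((m+1:ℕ):R) * x ^ 0 = ((m+1:ℕ):R) := by ring
  have h5 : x^(m+1) * x^0 = x^(m+1) := by ring
  rw [h2, h3, h4, h5, ← h1]
  ring

/-- "less or equal" in a parasemifield. -/
def pleq (t q : S) : Prop := t = q ∨ ∃ c : S, t + c = q

lemma pleq_refl (t : S) : pleq t t := Or.inl rfl

lemma pleq_trans {a b c : S} (h1 : pleq a b) (h2 : pleq b c) : pleq a c := by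
  rcases h1 with rfl | ⟨e, rfl⟩
  · exact h2
  · rcases h2 with rfl | ⟨f, rfl⟩
    · exact Or.inr ⟨e, rfl⟩
    · exact Or.inr ⟨e + f, by rw [add_assoc]⟩

lemma pleq_add {a b c d : S} (h1 : pleq a b) (h2 : pleq c d) : pleq (a + c) (b + d) := by
  rcases h1 with rfl | ⟨e, rfl⟩ <;> rcases h2 with rfl | ⟨f, rfl⟩
  · exact Or.inl rfl
  · exact Or.inr ⟨f, by rw [add_assoc]⟩
  · exact Or.inr ⟨e, by rw [add_right_comm]⟩
  · exact Or.inr ⟨e + f, by rw [add_add_add_comm]⟩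

lemma pleq_mul {a b c d : S} (h1 : pleq a b) (h2 : pleq c d) : pleq (a * c) (b * d) := by
  rcases h1 with rfl | ⟨e, rfl⟩ <;> rcases h2 with rfl | ⟨f, rfl⟩
  · exact Or.inl rfl
  · exact Or.inr ⟨a * f, by rw [← ps_mul_add]⟩
  · exact Or.inr ⟨e * c, by rw [← ps_add_mul]⟩
  · exact Or.inr ⟨a * f + e * (c + f), by rw [← add_assoc, ← ps_mul_add, ← ps_add_mul]⟩

section WithA

variable {A : Set S} (hA : IsSubparasemifield A)

/-- membership in the "bounded by A" set Q. -/
def InQ (A : Set S) (t : S) : Prop := ∃ q ∈ A, t = q ∨ ∃ c : S, t + c = q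

lemma inQ_of_mem {q : S} (hq : q ∈ A) : InQ A q := ⟨q, hq, Or.inl rfl⟩

lemma inQ_le {t t' : S} (h : pleq t t') (h' : InQ A t') : InQ A t := by
  obtain ⟨q, hq, hle⟩ := h'
  exact ⟨q, hq, pleq_trans h hle⟩

include hA

lemma one_mem_A : (1 : S) ∈ A := by
  obtain ⟨a, ha⟩ := hA.1
  have h := hA.2.2.1 a ha a⁻¹ (hA.2.2.2 a ha)
  rwa [mul_inv_cancel] at h

/-- the natural number n+1 as an element of S. -/
def natS : ℕ → S
  | 0 => 1
  | (k+1) => natS k + 1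

lemma natS_mem (k : ℕ) : natS (S := S) k ∈ A := by
  induction k with
  | zero => exact one_mem_A hA
  | succ k ih => exact hA.2.1 _ ih _ (one_mem_A hA)

lemma inQ_add {t t' : S} (h : InQ A t) (h' : InQ A t') : InQ A (t + t') := by
  obtain ⟨q, hq, hle⟩ := h
  obtain ⟨q', hq', hle'⟩ := h'
  exact ⟨q + q', hA.2.1 q hq q' hq', pleq_add hle hle'⟩

lemma inQ_mul {t t' : S} (h : InQ A t) (h' : InQ A t') : InQ A (t * t') := by
  obtain ⟨q, hq, hle⟩ := h
  obtain ⟨q', hq', hle'⟩ := h'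
  exact ⟨q * q', hA.2.2.1 q hq q' hq', pleq_mul hle hle'⟩

lemma inQ_pow {t : S} (h : InQ A t) (n : ℕ) : InQ A (t ^ n) := by
  induction n with
  | zero => exact pow_zero t ▸ inQ_of_mem (one_mem_A hA)
  | succ n ih => exact pow_succ t n ▸ inQ_mul hA ih h

omit hA

lemma coe_natS (k : ℕ) : ((k + 1 : ℕ) : WithZero S) = (natS k : S) := by
  induction k with
  | zero => simp [natS]
  | succ k ih =>
    push_cast
    push_cast at ih
    rw [ih, natS, WithZero.coe_add, WithZero.coe_one]

lemma wz_geom_sum_ne_zero (u : S) (m : ℕ) :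
    (∑ k ∈ Finset.range (m+1), (u : WithZero S) ^ k) ≠ 0 := by
  have : ∃ g : S, (∑ k ∈ Finset.range (m+1), (u : WithZero S) ^ k) = (g : WithZero S) := by
    induction m with
    | zero => exact ⟨1, by simp⟩
    | succ m ih =>
      obtain ⟨g, hg⟩ := ih
      refine ⟨g + u ^ (m+1), ?_⟩
      rw [Finset.sum_range_succ, hg, ← WithZero.coe_pow, ← WithZero.coe_add]
  obtain ⟨g, hg⟩ := this
  rw [hg]
  exact WithZero.coe_ne_zero

include hA

/-- purity: if `u^n` is bounded by `A` then so is `u`. -/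
lemma inQ_pure {u : S} {n : ℕ} (hn : 1 ≤ n) (h : InQ A (u ^ n)) : InQ A u := by
  obtain ⟨m, rfl⟩ : ∃ m, n = m + 1 := ⟨n - 1, by omega⟩
  set R := WithZero S
  set x : R := (u : R) with hx
  set G : R := ∑ k ∈ Finset.range (m+1), x ^ k with hG
  have hGne : G ≠ 0 := wz_geom_sum_ne_zero u m
  have hmain : ∃ w : R, x + w = ((natS m + u ^ (m+1) : S) : R) := by
    refine ⟨(((m+1 : ℕ) : R)
        + ∑ k ∈ Finset.range m, (((m:ℕ):R) * x^(k+1) + x^(k+m+2))) * G⁻¹, ?_⟩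
    have hid := congrArg (· * G⁻¹) (key_identity x m)
    rw [add_mul, mul_assoc, mul_assoc, mul_inv_cancel₀ hGne, mul_one, mul_one] at hid
    rw [hid, coe_natS, ← WithZero.coe_pow, ← WithZero.coe_add]
  obtain ⟨w, hmain⟩ := hmain
  have hw : w = 0 ∨ ∃ c : S, w = (c : R) := by
    induction w using WithZero.recZeroCoe with
    | zero => exact Or.inl rfl
    | coe c => exact Or.inr ⟨c, rfl⟩
  have hle : pleq u (natS m + u ^ (m+1)) := by
    rcases hw with rfl | ⟨c, rfl⟩
    · rw [add_zero] at hmain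
      exact Or.inl (WithZero.coe_inj.mp hmain)
    · rw [← WithZero.coe_add] at hmain
      exact Or.inr ⟨c, WithZero.coe_inj.mp hmain⟩
  exact inQ_le hle (inQ_add hA (inQ_of_mem (natS_mem hA m)) h)

end WithA

end Aux

theorem stmt_8 {S : Type*} [Parasemifield S] {m : ℕ} (s : Fin m → S)
    (hgen : ∀ t : S, SemiringGen (Set.range s) t)
    (A : Set S) (hA : IsSubparasemifield A)
    (hprime : ∀ B : Set S, IsSubparasemifield B → A ⊆ B)
    (Q : Set S) (hQ : Q = {t : S | ∃ q ∈ A, t = q ∨ ∃ c : S, t + c = q})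
    (C : Set (Fin m → ℕ)) (hC : C = {a : Fin m → ℕ | (∏ i, s i ^ a i) ∈ Q}) :
    (∀ a b : Fin m → ℕ, a ∈ C → b ∈ C → a + b ∈ C) ∧
    (∀ (n : ℕ) (a : Fin m → ℕ), 1 ≤ n → (n • a ∈ C ↔ a ∈ C)) := by
  subst hQ hC
  have hmem : ∀ a : Fin m → ℕ,
      (a ∈ {a : Fin m → ℕ | (∏ i, s i ^ a i) ∈ {t : S | ∃ q ∈ A, t = q ∨ ∃ c : S, t + c = q}})
        ↔ InQ A (∏ i, s i ^ a i) := fun a => Iff.rfl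
  constructor
  · intro a b ha hb
    rw [hmem] at ha hb ⊢
    have : (∏ i, s i ^ (a + b) i) = (∏ i, s i ^ a i) * (∏ i, s i ^ b i) := by
      rw [← Finset.prod_mul_distrib]
      exact Finset.prod_congr rfl fun i _ => by rw [Pi.add_apply, pow_add]
    rw [this]
    exact inQ_mul hA ha hb
  · intro n a hn
    have hpow : (∏ i, s i ^ (n • a) i) = (∏ i, s i ^ a i) ^ n := by
      rw [← Finset.prod_pow]
      exact Finset.prod_congr rfl fun i _ => by
        rw [Pi.smul_apply, smul_eq_mul, mul_comm, pow_mul]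
    rw [hmem, hmem, hpow]
    constructor
    · exact fun h => inQ_pure hA hn h
    · exact fun h => inQ_pow hA h n
end

section
/- Every additively idempotent parasemifield that is finitely generated as a semiring is order-unital: there exists u ∈ S such that for each s ∈ S there is n ∈ ℕ with uⁿ·s + 1 = 1. -/
section Aux

variable {S : Type*} [Parasemifield S]

theorem PSF.le_trans {a b c : S} (h1 : a + b = b) (h2 : b + c = c) : a + c = c := by
  calc a + c = a + (b + c) := by rw [h2]
    _ = (a + b) + c := (Parasemifield.add_assoc a b c).symm
    _ = b + c := by rw [h1]
    _ = c := h2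

theorem PSF.mul_mono {a b : S} (c : S) (h : a + b = b) : c * a + c * b = c * b := by
  rw [← Parasemifield.mul_add, h]

theorem PSF.one_le_foldr (idem : ∀ a : S, a + a = a) (l : List S) :
    1 + l.foldr (· + ·) 1 = l.foldr (· + ·) 1 := by
  induction l with
  | nil => simpa using idem 1
  | cons a l ih =>
    show 1 + (a + l.foldr (· + ·) 1) = a + l.foldr (· + ·) 1
    calc 1 + (a + l.foldr (· + ·) 1)
        = a + (1 + l.foldr (· + ·) 1) := by
          rw [← Parasemifield.add_assoc, Parasemifield.add_comm 1 a,
            Parasemifield.add_assoc]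
      _ = a + l.foldr (· + ·) 1 := by rw [ih]

theorem PSF.mem_le_foldr (idem : ∀ a : S, a + a = a) {x : S} {l : List S} (hx : x ∈ l) :
    x + l.foldr (· + ·) 1 = l.foldr (· + ·) 1 := by
  induction l with
  | nil => exact absurd hx List.not_mem_nil
  | cons a l ih =>
    show x + (a + l.foldr (· + ·) 1) = a + l.foldr (· + ·) 1
    rcases List.mem_cons.mp hx with rfl | hxs
    · rw [← Parasemifield.add_assoc, idem]
    · calc x + (a + l.foldr (· + ·) 1)
          = a + (x + l.foldr (· + ·) 1) := by
            rw [← Parasemifield.add_assoc, Parasemifield.add_comm x a,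
              Parasemifield.add_assoc]
        _ = a + l.foldr (· + ·) 1 := by rw [ih hxs]

end Aux

/-- Every additively idempotent parasemifield finitely generated as a semiring
is order-unital. -/
theorem stmt_11 {S : Type*} [Parasemifield S] (idem : ∀ a : S, a + a = a)
    (F : Finset S) (hgen : ∀ t : S, SemiringGen (↑F : Set S) t) :
    ∃ u : S, ∀ s : S, ∃ n : ℕ, u ^ n * s + 1 = 1 := by
  classical
  set v : S := F.toList.foldr (· + ·) (1 : S) with hv
  have hone : (1 : S) + v = v := PSF.one_le_foldr idem F.toList
  -- 1 ≤ v ^ m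
  have one_le_pow : ∀ m : ℕ, (1 : S) + v ^ m = v ^ m := by
    intro m
    induction m with
    | zero => simpa using idem 1
    | succ m ih =>
      have h1 : v + v ^ (m + 1) = v ^ (m + 1) := by
        have := PSF.mul_mono (a := 1) (b := v ^ m) v ih
        simpa [pow_succ, mul_comm] using this
      exact PSF.le_trans hone h1
  -- monotonicity of powers
  have pow_le : ∀ n m : ℕ, v ^ n + v ^ (n + m) = v ^ (n + m) := by
    intro n m
    have := PSF.mul_mono (a := 1) (b := v ^ m) (v ^ n) (one_le_pow m)
    simpa [pow_add] using this
  have key : ∀ t : S, SemiringGen (↑F : Set S) t → ∃ n : ℕ, t + v ^ n = v ^ n := by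
    intro t ht
    induction ht with
    | base hx =>
      exact ⟨1, by simpa [pow_one] using PSF.mem_le_foldr idem (Finset.mem_toList.mpr (by exact_mod_cast hx))⟩
    | add ha hb iha ihb =>
      rename_i a b
      obtain ⟨n, hn⟩ := iha
      obtain ⟨m, hm⟩ := ihb
      refine ⟨n + m, ?_⟩
      have han : a + v ^ (n + m) = v ^ (n + m) := PSF.le_trans hn (pow_le n m)
      have hbm : b + v ^ (n + m) = v ^ (n + m) := by
        have : b + v ^ (m + n) = v ^ (m + n) := PSF.le_trans hm (pow_le m n)
        simpa [Nat.add_comm] using this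
      calc a + b + v ^ (n + m) = a + (b + v ^ (n + m)) := Parasemifield.add_assoc _ _ _
        _ = a + v ^ (n + m) := by rw [hbm]
        _ = v ^ (n + m) := han
    | mul ha hb iha ihb =>
      rename_i a b
      obtain ⟨n, hn⟩ := iha
      obtain ⟨m, hm⟩ := ihb
      refine ⟨n + m, ?_⟩
      have h1 : a * b + v ^ n * b = v ^ n * b := by
        have := PSF.mul_mono (a := a) (b := v ^ n) b hn
        simpa [mul_comm] using this
      have h2 : v ^ n * b + v ^ (n + m) = v ^ (n + m) := by
        have := PSF.mul_mono (a := b) (b := v ^ m) (v ^ n) hm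
        simpa [pow_add] using this
      exact PSF.le_trans h1 h2
  refine ⟨v⁻¹, fun s => ?_⟩
  obtain ⟨n, hn⟩ := key s (hgen s)
  refine ⟨n, ?_⟩
  have hinv : (v⁻¹) ^ n * v ^ n = 1 := by
    rw [← mul_pow, inv_mul_cancel, one_pow]
  calc (v⁻¹) ^ n * s + 1 = (v⁻¹) ^ n * s + (v⁻¹) ^ n * v ^ n := by rw [hinv]
    _ = (v⁻¹) ^ n * (s + v ^ n) := (Parasemifield.mul_add _ _ _).symm
    _ = (v⁻¹) ^ n * v ^ n := by rw [hn]
    _ = 1 := hinv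
end

section
/- The lattice-ordered abelian group ℳ([0,1]) of continuous piecewise linear functions f : [0,1] → ℝ with integer coefficients, under pointwise addition, pointwise max, and pointwise min, is not finitely generated as a semiring (with semiring addition = pointwise max and semiring multiplication = pointwise addition of functions). More concretely: there is no finite set of such functions whose closure under pointwise max and pointwise sum is all of ℳ([0,1]). -/
/-- `f` is (when restricted to `[0,1]`) a continuous piecewise linear function
with integer coefficients: an element of `ℳ([0,1])`. -/
def PWLZ (f : ℝ → ℝ) : Prop :=
  ContinuousOn f (Set.Icc 0 1) ∧
  ∃ (k : ℕ) (t : Fin (k + 1) → ℝ), t 0 = 0 ∧ t (Fin.last k) = 1 ∧ Monotone t ∧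
    ∀ i : Fin k, ∃ a b : ℤ,
      ∀ x ∈ Set.Icc (t i.castSucc) (t i.succ), f x = (a : ℝ) * x + (b : ℝ)

/-- Closure of a set of real-valued functions under pointwise maximum
(the semiring "addition") and pointwise sum (the semiring "multiplication"). -/
inductive MaxPlusGen {α : Type*} (X : Set (α → ℝ)) : (α → ℝ) → Prop
  | base {f : α → ℝ} : f ∈ X → MaxPlusGen X f
  | max {f g : α → ℝ} : MaxPlusGen X f → MaxPlusGen X g →
      MaxPlusGen X (fun x => max (f x) (g x))
  | add {f g : α → ℝ} : MaxPlusGen X f → MaxPlusGen X g → MaxPlusGen X (f + g)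

/-- Every PWLZ function is affine with integer coefficients on some interval `[0,d]`. -/
lemma pwlz_affine_initial {f : ℝ → ℝ} (hf : PWLZ f) :
    ∃ d : ℝ, 0 < d ∧ d ≤ 1 ∧ ∃ a b : ℤ, ∀ x ∈ Set.Icc (0:ℝ) d,
      f x = (a : ℝ) * x + (b : ℝ) := by
  classical
  obtain ⟨-, k, t, ht0, htl, hmono, hpiece⟩ := hf
  set s : Finset (Fin (k+1)) := Finset.univ.filter (fun j => 0 < t j) with hs
  have hsne : s.Nonempty := ⟨Fin.last k, by simp [hs, htl]⟩
  set j := s.min' hsne with hj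
  have hjpos : 0 < t j := by
    have := s.min'_mem hsne
    simpa [hs] using this
  have hjne : j ≠ 0 := by
    intro h
    rw [h, ht0] at hjpos; exact lt_irrefl _ hjpos
  obtain ⟨i, hi⟩ := Fin.exists_succ_eq.mpr hjne
  have hc0 : t i.castSucc = 0 := by
    refine le_antisymm ?_ ?_
    · by_contra h
      push_neg at h
      have hmem : i.castSucc ∈ s := by simp [hs, h]
      have := s.min'_le _ hmem
      have hlt : j ≤ i.castSucc := this
      have : i.castSucc < j := by
        rw [← hi]; exact Fin.castSucc_lt_succ
      exact absurd hlt (not_le.mpr this)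
    · rw [← ht0]; exact hmono (Fin.zero_le _)
  obtain ⟨a, b, hab⟩ := hpiece i
  refine ⟨t j, hjpos, ?_, a, b, ?_⟩
  · rw [← htl]; exact hmono (Fin.le_last j)
  · intro x hx
    apply hab
    rw [hc0, hi]
    exact hx

/-- All elements of a finite set of PWLZ functions are simultaneously affine
on some interval `[0,d]`. -/
lemma common_affine_initial (F : Finset (ℝ → ℝ)) (hF : ∀ f ∈ F, PWLZ f) :
    ∃ d : ℝ, 0 < d ∧ d ≤ 1 ∧ ∀ f ∈ F, ∃ a b : ℤ, ∀ x ∈ Set.Icc (0:ℝ) d,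
      f x = (a : ℝ) * x + (b : ℝ) := by
  classical
  induction F using Finset.induction with
  | empty => exact ⟨1, one_pos, le_refl 1, by simp⟩
  | @insert f F hfF ih =>
    obtain ⟨d, hd, hd1, hall⟩ := ih (fun g hg => hF g (Finset.mem_insert_of_mem hg))
    obtain ⟨d', hd', hd'1, a, b, hab⟩ :=
      pwlz_affine_initial (hF f (Finset.mem_insert_self f F))
    refine ⟨min d d', lt_min hd hd', le_trans (min_le_left _ _) hd1, ?_⟩
    intro g hg
    rcases Finset.mem_insert.mp hg with h | h
    · subst h
      exact ⟨a, b, fun x hx => hab x ⟨hx.1, le_trans hx.2 (min_le_right _ _)⟩⟩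
    · obtain ⟨a', b', hab'⟩ := hall g h
      exact ⟨a', b', fun x hx => hab' x ⟨hx.1, le_trans hx.2 (min_le_left _ _)⟩⟩

/-- A function affine on `Icc 0 d` is convex there. -/
lemma affine_convexOn {a b d : ℝ} {f : ℝ → ℝ}
    (h : ∀ x ∈ Set.Icc (0:ℝ) d, f x = a * x + b) :
    ConvexOn ℝ (Set.Icc (0:ℝ) d) f := by
  refine ⟨convex_Icc _ _, ?_⟩
  intro x hx y hy s u hs hu hsu
  have hxy : s • x + u • y ∈ Set.Icc (0:ℝ) d := (convex_Icc _ _) hx hy hs hu hsu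
  rw [h _ hxy, h _ hx, h _ hy]
  simp only [smul_eq_mul]
  have hu' : u = 1 - s := by linarith
  subst hu'
  apply le_of_eq
  ring

/-- Anything generated from functions convex on a set is convex on that set. -/
lemma gen_convexOn {X : Set (ℝ → ℝ)} {s : Set ℝ}
    (hbase : ∀ f ∈ X, ConvexOn ℝ s f) :
    ∀ h, MaxPlusGen X h → ConvexOn ℝ s h := by
  intro h hh
  induction hh with
  | base hf => exact hbase _ hf
  | max _ _ ihf ihg => exact ihf.sup ihg
  | add _ _ ihf ihg => exact ihf.add ihg

/-- `ℳ([0,1])` is not finitely generated as a semiring under pointwise max and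
pointwise sum: no finite set of its elements generates every element
(as a function on `[0,1]`). -/
theorem stmt_15 :
    ¬ ∃ F : Finset (ℝ → ℝ), (∀ f ∈ F, PWLZ f) ∧
      ∀ g : ℝ → ℝ, PWLZ g → ∃ h : ℝ → ℝ,
        MaxPlusGen (↑F : Set (ℝ → ℝ)) h ∧ Set.EqOn g h (Set.Icc 0 1) := by
  rintro ⟨F, hF, hgen⟩
  obtain ⟨d, hd, hd1, hall⟩ := common_affine_initial F hF
  -- choose q with 2/q ≤ d
  obtain ⟨q, hq⟩ := exists_nat_ge (2 / d)
  have hq0 : (0:ℝ) < q := lt_of_lt_of_le (by positivity) hq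
  have h2qd : 2 / (q:ℝ) ≤ d := by
    rw [div_le_iff₀ hq0] at *
    nlinarith [div_le_iff₀ hd |>.mp (le_refl (2/d))]
  have hq1 : (1:ℝ) ≤ q := by
    have h2 : (2:ℝ) ≤ 2 / d := by
      rw [le_div_iff₀ hd]; nlinarith
    linarith
  -- the witness g = min (q x) 1
  set g : ℝ → ℝ := fun x => min ((q:ℝ) * x) 1 with hgdef
  have hgP : PWLZ g := by
    constructor
    · exact ((continuous_const.mul continuous_id).min continuous_const).continuousOn
    · refine ⟨2, ![0, 1/(q:ℝ), 1], rfl, rfl, ?_, ?_⟩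
      · rw [Fin.monotone_iff_le_succ]
        intro i
        fin_cases i
        · show (0:ℝ) ≤ 1/(q:ℝ)
          positivity
        · show (1/(q:ℝ)) ≤ 1
          rw [div_le_one hq0]; exact hq1
      · intro i
        fin_cases i
        · refine ⟨(q:ℤ), 0, ?_⟩
          intro x hx
          simp only [Fin.castSucc, Fin.succ] at hx
          have hx1 : (0:ℝ) ≤ x := by simpa using hx.1
          have hx2 : x ≤ 1/(q:ℝ) := by simpa using hx.2
          have : (q:ℝ) * x ≤ 1 := by
            rw [div_le_iff₀ hq0] at *
            calc (q:ℝ) * x ≤ (q:ℝ) * (1/(q:ℝ)) := by nlinarith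
            _ = 1 := by field_simp
          simp [hgdef, min_eq_left this]
        · refine ⟨0, 1, ?_⟩
          intro x hx
          have hx1 : 1/(q:ℝ) ≤ x := by simpa using hx.1
          have : (1:ℝ) ≤ (q:ℝ) * x := by
            rw [div_le_iff₀ hq0] at hx1; nlinarith
          simp [hgdef, min_eq_right this]
  obtain ⟨h, hhgen, heq⟩ := hgen g hgP
  -- h is convex on [0, d]
  have hconv : ConvexOn ℝ (Set.Icc (0:ℝ) d) h := by
    refine gen_convexOn ?_ h hhgen
    intro f hf
    obtain ⟨a, b, hab⟩ := hall f hf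
    exact affine_convexOn hab
  -- evaluate convexity at 0 and 2/q with weights 1/2, 1/2
  have h0m : (0:ℝ) ∈ Set.Icc (0:ℝ) d := ⟨le_refl _, le_of_lt hd⟩
  have h2m : (2/(q:ℝ)) ∈ Set.Icc (0:ℝ) d := ⟨by positivity, h2qd⟩
  have key := hconv.2 h0m h2m (by norm_num : (0:ℝ) ≤ 1/2)
    (by norm_num : (0:ℝ) ≤ 1/2) (by norm_num)
  have hmid : (1/2 : ℝ) • (0:ℝ) + (1/2 : ℝ) • (2/(q:ℝ)) = 1/(q:ℝ) := by
    simp [smul_eq_mul]; ring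
  rw [hmid] at key
  -- translate h-values to g-values
  have hmem0 : (0:ℝ) ∈ Set.Icc (0:ℝ) 1 := by norm_num
  have hmem2 : (2/(q:ℝ)) ∈ Set.Icc (0:ℝ) 1 := ⟨by positivity, le_trans h2qd hd1⟩
  have hmem1 : (1/(q:ℝ)) ∈ Set.Icc (0:ℝ) 1 := by
    refine ⟨by positivity, ?_⟩
    have h12 : (1:ℝ)/(q:ℝ) ≤ 2/(q:ℝ) := by gcongr <;> norm_num
    exact le_trans h12 (le_trans h2qd hd1)
  have hv0 : h 0 = 0 := by
    rw [← heq hmem0]; simp [hgdef]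
  have hv2 : h (2/(q:ℝ)) = 1 := by
    rw [← heq hmem2]
    show min ((q:ℝ) * (2/(q:ℝ))) 1 = 1
    have h2 : (q:ℝ) * (2/(q:ℝ)) = 2 := by field_simp
    rw [h2]; norm_num
  have hv1 : h (1/(q:ℝ)) = 1 := by
    rw [← heq hmem1]
    show min ((q:ℝ) * (1/(q:ℝ))) 1 = 1
    have h1 : (q:ℝ) * (1/(q:ℝ)) = 1 := by field_simp
    rw [h1, min_self]
  rw [hv0, hv2, hv1] at key
  simp only [smul_eq_mul] at key
  linarith
end
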